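/- arXiv:1210.8290 — 6 statements merged into one kernel-verified Lean document; each statement's English description precedes it below -/
import Mathlib

section
/- Let X, Y be positive definite real symmetric m×m matrices and let log_c(X,Y) := (1/(1-c))·(X^(1-c)·Y^(c-1) − I) for c ≠ 1. Then the limit as c → 1 of log_c(X,Y) equals log(X) − log(Y). -/
open Filter Topology Matrix

/-- Matrix power of a Hermitian (symmetric) real matrix via spectral decomposition. -/
noncomputable def mpow {m : ℕ} (A : Matrix (Fin m) (Fin m) ℝ) (c : ℝ) :
    Matrix (Fin m) (Fin m) ℝ :=
  if hA : A.IsHermitian then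
    (hA.eigenvectorUnitary : Matrix (Fin m) (Fin m) ℝ) *
      Matrix.diagonal (fun i => hA.eigenvalues i ^ c) *
      star (hA.eigenvectorUnitary : Matrix (Fin m) (Fin m) ℝ)
  else 0

/-- Matrix logarithm of a Hermitian (symmetric) real matrix via spectral decomposition. -/
noncomputable def mlog {m : ℕ} (A : Matrix (Fin m) (Fin m) ℝ) :
    Matrix (Fin m) (Fin m) ℝ :=
  if hA : A.IsHermitian then
    (hA.eigenvectorUnitary : Matrix (Fin m) (Fin m) ℝ) *
      Matrix.diagonal (fun i => Real.log (hA.eigenvalues i)) *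
      star (hA.eigenvectorUnitary : Matrix (Fin m) (Fin m) ℝ)
  else 0


/-!
With `s = 1 - c`, `X^s Y^{-s} - 1 = (X^s - 1) + X^s (Y^{-s} - 1)`. In an eigenbasis of a positive
definite `A`, `s⁻¹ (A^s - 1)` is diagonal with entries `(λ^s - 1) / s → log λ`, so
`s⁻¹ (X^s - 1) → log X`, `s⁻¹ (Y^{-s} - 1) → -log Y`, and `X^s → 1`.
-/

lemma Real.tendsto_inv_mul_rpow_sub_one {x : ℝ} (hx : 0 < x) :
    Tendsto (fun s : ℝ => s⁻¹ * (x ^ s - 1)) (𝓝[≠] 0) (𝓝 (Real.log x)) := by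
  have h := hasDerivAt_iff_tendsto_slope.mp (Real.hasStrictDerivAt_const_rpow hx 0).hasDerivAt
  rw [Real.rpow_zero, one_mul] at h
  refine h.congr fun s => ?_
  rw [slope_def_field, sub_zero, Real.rpow_zero, div_eq_inv_mul]

lemma Matrix.tendsto_mul_diagonal_mul {α n R : Type*} [Fintype n] [DecidableEq n] [Semiring R]
    [TopologicalSpace R] [IsTopologicalSemiring R] {l : Filter α} {d : α → n → R}
    {e : n → R} (U V : Matrix n n R) (h : ∀ i, Tendsto (fun a => d a i) l (𝓝 (e i))) :
    Tendsto (fun a => U * diagonal (d a) * V) l (𝓝 (U * diagonal e * V)) :=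
  ((tendsto_const_nhds.mul
    ((continuous_id.matrix_diagonal.tendsto e).comp (tendsto_pi_nhds.mpr h))).mul
    tendsto_const_nhds)

section Spectral

variable {m : ℕ} {A : Matrix (Fin m) (Fin m) ℝ}

lemma mpow_of_isHermitian (hA : A.IsHermitian) (t : ℝ) :
    mpow A t = (hA.eigenvectorUnitary : Matrix (Fin m) (Fin m) ℝ) *
      diagonal (fun i => hA.eigenvalues i ^ t) *
      star (hA.eigenvectorUnitary : Matrix (Fin m) (Fin m) ℝ) := by
  rw [mpow, dif_pos hA]

lemma mlog_of_isHermitian (hA : A.IsHermitian) :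
    mlog A = (hA.eigenvectorUnitary : Matrix (Fin m) (Fin m) ℝ) *
      diagonal (fun i => Real.log (hA.eigenvalues i)) *
      star (hA.eigenvectorUnitary : Matrix (Fin m) (Fin m) ℝ) := by
  rw [mlog, dif_pos hA]

lemma mpow_zero (hA : A.IsHermitian) : mpow A 0 = 1 := by
  simp only [mpow_of_isHermitian hA, Real.rpow_zero, diagonal_one, Matrix.mul_one]
  exact Unitary.mul_star_self_of_mem hA.eigenvectorUnitary.2

lemma inv_smul_mpow_sub_one (hA : A.IsHermitian) (s : ℝ) :
    s⁻¹ • (mpow A s - 1) = (hA.eigenvectorUnitary : Matrix (Fin m) (Fin m) ℝ) *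
      diagonal (fun i => s⁻¹ * (hA.eigenvalues i ^ s - 1)) *
      star (hA.eigenvectorUnitary : Matrix (Fin m) (Fin m) ℝ) := by
  conv_lhs => rw [← mpow_zero hA, mpow_of_isHermitian hA, mpow_of_isHermitian hA, ← sub_mul,
    ← mul_sub, diagonal_sub, ← smul_mul, ← Matrix.mul_smul, ← diagonal_smul]
  simp only [Real.rpow_zero]
  rfl

lemma tendsto_mpow_nhds_zero (hA : A.PosDef) : Tendsto (mpow A) (𝓝 0) (𝓝 1) := by
  have hAh := hA.isHermitian
  rw [← mpow_zero hAh, funext (mpow_of_isHermitian hAh)]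
  exact tendsto_mul_diagonal_mul _ _ fun i =>
    Real.continuousAt_const_rpow (hA.eigenvalues_pos i).ne'

lemma tendsto_inv_smul_mpow_sub_one (hA : A.PosDef) :
    Tendsto (fun s : ℝ => s⁻¹ • (mpow A s - 1)) (𝓝[≠] 0) (𝓝 (mlog A)) := by
  have hAh := hA.isHermitian
  simp only [inv_smul_mpow_sub_one hAh, mlog_of_isHermitian hAh]
  exact tendsto_mul_diagonal_mul _ _ fun i =>
    Real.tendsto_inv_mul_rpow_sub_one (hA.eigenvalues_pos i)

end Spectral

theorem limit_generalized_matrix_log_discrepancy {m : ℕ}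
    (X Y : Matrix (Fin m) (Fin m) ℝ) (hX : X.PosDef) (hY : Y.PosDef) :
    Tendsto (fun c : ℝ => (1 / (1 - c)) • (mpow X (1 - c) * mpow Y (c - 1) - 1))
      (𝓝[≠] 1) (𝓝 (mlog X - mlog Y)) := by
  have h_one_sub : Tendsto (fun c : ℝ => 1 - c) (𝓝[≠] 1) (𝓝[≠] 0) :=
    sub_self (1 : ℝ) ▸ Filter.map_subLeft_nhdsNE.le
  have h_sub_one : Tendsto (fun c : ℝ => c - 1) (𝓝[≠] 1) (𝓝[≠] 0) :=
    sub_self (1 : ℝ) ▸ Filter.map_subRight_nhdsNE.le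
  have hX_log := (tendsto_inv_smul_mpow_sub_one hX).comp h_one_sub
  have hY_log := (tendsto_inv_smul_mpow_sub_one hY).comp h_sub_one
  have hX_one := (tendsto_mpow_nhds_zero hX).comp (tendsto_nhds_of_tendsto_nhdsWithin h_one_sub)
  have h := hX_log.add (hX_one.mul hY_log.neg)
  rw [Matrix.one_mul, ← sub_eq_add_neg] at h
  refine h.congr fun c => ?_
  simp only [Function.comp_apply]
  rw [show c - 1 = -(1 - c) by ring, inv_neg, neg_smul, neg_neg, Matrix.mul_smul, mul_sub,
    Matrix.mul_one, one_div, ← smul_add]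
  congr 1
  abel
end

section
/- For positive reals φ, ψ and β ∈ ℝ \ {0,1}, define s_β(φ,ψ) := (1/(β−1))·(φ^β − φ·ψ^(β−1)) − (1/β)·(φ^β − ψ^β). Then the limit as β → 0 of s_β(φ,ψ) equals log(ψ) − log(φ) + φ/ψ − 1 (the Itakura–Saito integrand). -/
/-!
The first summand is continuous at `β = 0`, with value `(1 - φ / ψ) / (0 - 1) = φ / ψ - 1`.
The second is the difference quotient at `0` of `β ↦ φ ^ β - ψ ^ β`, whose derivative there
is `log φ - log ψ`.
-/

open Filter Topology Real

lemma tendsto_inv_mul_rpow_sub_rpow {a b : ℝ} (ha : 0 < a) (hb : 0 < b) :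
    Tendsto (fun β : ℝ => β⁻¹ * (a ^ β - b ^ β)) (𝓝[≠] 0) (𝓝 (log a - log b)) := by
  have hderiv : HasDerivAt (fun β : ℝ => a ^ β - b ^ β) (log a - log b) 0 := by
    have h := (hasStrictDerivAt_const_rpow ha 0).hasDerivAt.sub
      (hasStrictDerivAt_const_rpow hb 0).hasDerivAt
    simp only [rpow_zero, one_mul] at h
    exact h
  refine (hasDerivAt_iff_tendsto_slope.mp hderiv).congr fun β => ?_
  simp [slope_def_field, div_eq_inv_mul]

lemma tendsto_inv_sub_one_mul_rpow_sub_mul_rpow_sub_one {a b : ℝ} (ha : 0 < a) (hb : 0 < b) :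
    Tendsto (fun β : ℝ => (β - 1)⁻¹ * (a ^ β - a * b ^ (β - 1))) (𝓝 0) (𝓝 (a / b - 1)) := by
  have hcont : ContinuousAt (fun β : ℝ => (β - 1)⁻¹ * (a ^ β - a * b ^ (β - 1))) 0 := by
    refine ((continuousAt_id.sub continuousAt_const).inv₀ (by norm_num)).mul
      ((continuousAt_const_rpow ha.ne').sub (continuousAt_const.mul
        ((continuousAt_const_rpow hb.ne').comp (continuousAt_id.sub continuousAt_const))))
  convert hcont.tendsto using 2
  simp only [rpow_zero, zero_sub, rpow_neg_one]
  field_simp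
  ring

theorem scalar_beta_divergence_tendsto_IS (φ ψ : ℝ) (hφ : 0 < φ) (hψ : 0 < ψ) :
    Tendsto (fun β : ℝ =>
        (1 / (β - 1)) * (φ ^ β - φ * ψ ^ (β - 1)) - (1 / β) * (φ ^ β - ψ ^ β))
      (𝓝[≠] 0) (𝓝 (Real.log ψ - Real.log φ + φ / ψ - 1)) := by
  simp only [one_div]
  convert ((tendsto_inv_sub_one_mul_rpow_sub_mul_rpow_sub_one hφ hψ).mono_left
    nhdsWithin_le_nhds).sub (tendsto_inv_mul_rpow_sub_rpow hφ hψ) using 2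
  ring
end

section
/- For positive reals φ, ψ and β ∈ ℝ \ {0,1}, define s_β(φ,ψ) := (1/(β−1))·(φ^β − φ·ψ^(β−1)) − (1/β)·(φ^β − ψ^β). Then the limit as β → 1 of s_β(φ,ψ) equals φ·(log φ − log ψ) − φ + ψ (the Kullback–Leibler integrand). -/
/-! The first term is the difference quotient at `β = 1` of `f β = φ ^ β - φ * ψ ^ (β - 1)`,
which vanishes at `1`, so it tends to `f' 1 = φ * (log φ - log ψ)`. The second term is
continuous at `β = 1`, with value `φ - ψ`. -/

open Filter Topology

theorem tendsto_inv_sub_mul_of_hasDerivAt {f : ℝ → ℝ} {f' a : ℝ} (hf : HasDerivAt f f' a)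
    (ha : f a = 0) : Tendsto (fun x => (x - a)⁻¹ * f x) (𝓝[≠] a) (𝓝 f') :=
  (hasDerivAt_iff_tendsto_slope.mp hf).congr fun x => by
    rw [slope_def_field, ha, sub_zero, div_eq_inv_mul]

theorem hasDerivAt_rpow_sub_mul_rpow_sub_one {φ ψ : ℝ} (hφ : 0 < φ) (hψ : 0 < ψ) (β : ℝ) :
    HasDerivAt (fun β : ℝ => φ ^ β - φ * ψ ^ (β - 1))
      (φ ^ β * Real.log φ - φ * (ψ ^ (β - 1) * Real.log ψ)) β :=
  (Real.hasStrictDerivAt_const_rpow hφ β).hasDerivAt.sub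
    (((Real.hasStrictDerivAt_const_rpow hψ (β - 1)).hasDerivAt.comp_sub_const β 1).const_mul φ)

theorem continuousAt_inv_mul_rpow_sub_rpow {φ ψ β : ℝ} (hφ : φ ≠ 0) (hψ : ψ ≠ 0) (hβ : β ≠ 0) :
    ContinuousAt (fun β : ℝ => β⁻¹ * (φ ^ β - ψ ^ β)) β :=
  (continuousAt_inv₀ hβ).mul
    ((Real.continuousAt_const_rpow hφ).sub (Real.continuousAt_const_rpow hψ))

theorem scalar_beta_divergence_tendsto_KL (φ ψ : ℝ) (hφ : 0 < φ) (hψ : 0 < ψ) :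
    Tendsto (fun β : ℝ =>
        (1 / (β - 1)) * (φ ^ β - φ * ψ ^ (β - 1)) - (1 / β) * (φ ^ β - ψ ^ β))
      (𝓝[≠] 1) (𝓝 (φ * (Real.log φ - Real.log ψ) - φ + ψ)) := by
  have hdiff : Tendsto (fun β : ℝ => (β - 1)⁻¹ * (φ ^ β - φ * ψ ^ (β - 1))) (𝓝[≠] 1)
      (𝓝 (φ * (Real.log φ - Real.log ψ))) := by
    refine tendsto_inv_sub_mul_of_hasDerivAt ?_ (by simp)
    convert hasDerivAt_rpow_sub_mul_rpow_sub_one hφ hψ 1 using 1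
    simp only [Real.rpow_one, sub_self, Real.rpow_zero, one_mul]
    ring
  have hcont : Tendsto (fun β : ℝ => β⁻¹ * (φ ^ β - ψ ^ β)) (𝓝[≠] 1) (𝓝 (φ - ψ)) := by
    simpa using (continuousAt_inv_mul_rpow_sub_rpow hφ.ne' hψ.ne' one_ne_zero).tendsto.mono_left
      nhdsWithin_le_nhds
  convert hdiff.sub hcont using 2
  · simp only [one_div]
  · ring
end

section
/- Let P, Q be commuting positive definite real symmetric n×n matrices. Then the limit as β → 0 of tr[(1/(β−1))·(P^β − P·Q^(β−1)) − (1/β)·(P^β − Q^β)] equals tr[log Q − log P + P·Q⁻¹ − I] (the Burg matrix divergence). -/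
open Filter Topology Matrix

/-!
Everything is read off the eigenvalues `pᵢ` of `P`:
`tr P^β = ∑ pᵢ^β` and `tr log P = ∑ log pᵢ`.
The first term `(tr P^β - tr (P Q^(β-1))) / (β - 1)` is continuous in `β`, so at `β = 0` it
tends to `tr (P Q⁻¹) - n`. The second, `(tr P^β - tr Q^β) / β`, is the difference quotient at
`0` of `β ↦ tr P^β - tr Q^β`, which vanishes at `0` and has derivative
`∑ log pᵢ - ∑ log qᵢ = tr log P - tr log Q` there.
-/

section Unitary

variable {ι R : Type*} [Fintype ι] [DecidableEq ι] [CommRing R] [StarRing R]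

lemma trace_unitary_mul_diagonal_mul_star (U : unitaryGroup ι R) (d : ι → R) :
    ((U : Matrix ι ι R) * diagonal d * star (U : Matrix ι ι R)).trace = ∑ i, d i := by
  rw [trace_mul_cycle, mem_unitaryGroup_iff'.mp U.2, one_mul, trace_diagonal]

lemma unitary_conj_mul_unitary_conj (U : unitaryGroup ι R) (D E : Matrix ι ι R) :
    (U : Matrix ι ι R) * D * star (U : Matrix ι ι R) *
        ((U : Matrix ι ι R) * E * star (U : Matrix ι ι R)) =
      (U : Matrix ι ι R) * (D * E) * star (U : Matrix ι ι R) := by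
  simp only [Matrix.mul_assoc]
  rw [← Matrix.mul_assoc (star _) (U : Matrix ι ι R), mem_unitaryGroup_iff'.mp U.2,
    Matrix.one_mul]

end Unitary

section SpectralCalculus

variable {m : ℕ} {A : Matrix (Fin m) (Fin m) ℝ}

lemma trace_mpow (hA : A.IsHermitian) (c : ℝ) :
    (mpow A c).trace = ∑ i, hA.eigenvalues i ^ c := by
  rw [mpow, dif_pos hA, trace_unitary_mul_diagonal_mul_star]

lemma trace_mlog (hA : A.IsHermitian) :
    (mlog A).trace = ∑ i, Real.log (hA.eigenvalues i) := by
  rw [mlog, dif_pos hA, trace_unitary_mul_diagonal_mul_star]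

lemma mpow_neg_one (hA : A.PosDef) : mpow A (-1) = A⁻¹ := by
  refine (inv_eq_left_inv ?_).symm
  rw [mpow, dif_pos hA.1]
  conv_lhs => enter [2]; rw [hA.1.spectral_theorem, Unitary.conjStarAlgAut_apply]
  rw [unitary_conj_mul_unitary_conj, diagonal_mul_diagonal]
  have hdiag : (diagonal fun i => hA.1.eigenvalues i ^ (-1 : ℝ) *
      (RCLike.ofReal ∘ hA.1.eigenvalues) i) = 1 := by
    rw [← diagonal_one]
    congr 1
    funext i
    simp [Real.rpow_neg_one, (hA.eigenvalues_pos i).ne']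
  rw [hdiag, Matrix.mul_one]
  exact mem_unitaryGroup_iff.mp hA.1.eigenvectorUnitary.2

lemma continuous_mpow (hA : A.IsHermitian) (hA₀ : ∀ i, hA.eigenvalues i ≠ 0) :
    Continuous fun c => mpow A c := by
  simp only [mpow, dif_pos hA]
  refine (continuous_const.matrix_mul (Continuous.matrix_diagonal ?_)).matrix_mul continuous_const
  exact continuous_pi fun i =>
    continuous_iff_continuousAt.mpr fun _ => Real.continuousAt_const_rpow (hA₀ i)

lemma hasDerivAt_trace_mpow_zero (hA : A.PosDef) :
    HasDerivAt (fun c => (mpow A c).trace) (mlog A).trace 0 := by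
  simp only [trace_mpow hA.1, trace_mlog hA.1]
  simpa using HasDerivAt.fun_sum (u := Finset.univ)
    fun i _ => (Real.hasStrictDerivAt_const_rpow (hA.eigenvalues_pos i) 0).hasDerivAt

end SpectralCalculus

section Limits

variable {m : ℕ} {P Q : Matrix (Fin m) (Fin m) ℝ}

lemma tendsto_trace_mpow_sub_trace_mul_mpow_sub_one (hP : P.PosDef) (hQ : Q.PosDef) :
    Tendsto (fun β : ℝ => 1 / (β - 1) * ((mpow P β).trace - (P * mpow Q (β - 1)).trace))
      (𝓝 0) (𝓝 ((P * Q⁻¹).trace - m)) := by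
  have hcont : Continuous fun β : ℝ => (mpow P β).trace - (P * mpow Q (β - 1)).trace :=
    (continuous_mpow hP.1 fun i => (hP.eigenvalues_pos i).ne').matrix_trace.sub
      (continuous_const.matrix_mul ((continuous_mpow hQ.1 fun i => (hQ.eigenvalues_pos i).ne').comp
        (continuous_sub_right 1))).matrix_trace
  have hlim :=
    (((continuous_sub_right (1 : ℝ)).tendsto 0).inv₀ (by norm_num)).mul (hcont.tendsto 0)
  convert hlim using 2
  · simp
  · simp [mpow_zero hP.1, mpow_neg_one hQ]

lemma tendsto_trace_mpow_sub_trace_mpow_div (hP : P.PosDef) (hQ : Q.PosDef) :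
    Tendsto (fun β : ℝ => 1 / β * ((mpow P β).trace - (mpow Q β).trace))
      (𝓝[≠] 0) (𝓝 ((mlog P).trace - (mlog Q).trace)) := by
  simpa [mpow_zero hP.1, mpow_zero hQ.1] using
    ((hasDerivAt_trace_mpow_zero hP).sub (hasDerivAt_trace_mpow_zero hQ)).tendsto_slope_zero

end Limits

theorem beta_matrix_divergence_tendsto_burg_general {n : ℕ}
    (P Q : Matrix (Fin n) (Fin n) ℝ) (hP : P.PosDef) (hQ : Q.PosDef) :
    Tendsto (fun β : ℝ =>
        ((1 / (β - 1)) • (mpow P β - P * mpow Q (β - 1)) -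
          (1 / β) • (mpow P β - mpow Q β)).trace)
      (𝓝[≠] 0) (𝓝 ((mlog Q - mlog P + P * Q⁻¹ - 1).trace)) := by
  convert ((tendsto_trace_mpow_sub_trace_mul_mpow_sub_one hP hQ).mono_left
      nhdsWithin_le_nhds).sub (tendsto_trace_mpow_sub_trace_mpow_div hP hQ) using 2 with β
  · simp only [trace_sub, trace_smul, smul_eq_mul]
  · rw [trace_sub, trace_add, trace_sub, trace_one, Fintype.card_fin]
    ring

theorem beta_matrix_divergence_tendsto_burg {n : ℕ}
    (P Q : Matrix (Fin n) (Fin n) ℝ) (hP : P.PosDef) (hQ : Q.PosDef)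
    (hPQ : Commute P Q) :
    Tendsto (fun β : ℝ =>
        ((1 / (β - 1)) • (mpow P β - P * mpow Q (β - 1)) -
          (1 / β) • (mpow P β - mpow Q β)).trace)
      (𝓝[≠] 0) (𝓝 ((mlog Q - mlog P + P * Q⁻¹ - 1).trace)) :=
  beta_matrix_divergence_tendsto_burg_general P Q hP hQ
end

section
/- Let P, Q be commuting positive definite real symmetric n×n matrices. Then the limit as β → 1 of tr[(1/(β−1))·(P^β − P·Q^(β−1)) − (1/β)·(P^β − Q^β)] equals tr[P·(log P − log Q) − P + Q] (the von Neumann relative entropy extended to non-equal-trace matrices). -/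
open Filter Topology Matrix

/-
Diagonalise `Q = U diag(μ) U*` and put `cⱼ = (U* P U)ⱼⱼ`, so that `∑ cⱼ = tr P` and every trace in
the divergence is a finite sum: `tr (P Q^γ) = ∑ cⱼ μⱼ^γ`, `tr (P log Q) = ∑ cⱼ log μⱼ`, and
`tr P^β = ∑ λᵢ^β` over the eigenvalues of `P`. The first term of the divergence is then the
difference quotient at `β = 1` of `g β = ∑ λᵢ^β - ∑ cⱼ μⱼ^(β-1)`, which vanishes at `1`, so it
tends to `g' 1 = ∑ λᵢ log λᵢ - ∑ cⱼ log μⱼ = tr (P log P - P log Q)`; the second term is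
continuous at `1`.
-/

theorem Matrix.trace_mul_mul_diagonal_mul {ι R : Type*} [Fintype ι] [DecidableEq ι]
    [CommSemiring R] (B U V : Matrix ι ι R) (d : ι → R) :
    (B * (U * diagonal d * V)).trace = ∑ i, (V * B * U) i i * d i := by
  rw [← mul_assoc, trace_mul_comm, ← mul_assoc, ← mul_assoc]
  simp [trace, mul_diagonal]

namespace Matrix.IsHermitian

variable {m : ℕ} {A : Matrix (Fin m) (Fin m) ℝ} (hA : A.IsHermitian)

local notation "U" => (hA.eigenvectorUnitary : Matrix (Fin m) (Fin m) ℝ)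

theorem trace_mul_mpow (B : Matrix (Fin m) (Fin m) ℝ) (c : ℝ) :
    (B * mpow A c).trace = ∑ i, (star U * B * U) i i * hA.eigenvalues i ^ c := by
  rw [mpow, dif_pos hA, trace_mul_mul_diagonal_mul]

theorem trace_mul_mlog (B : Matrix (Fin m) (Fin m) ℝ) :
    (B * mlog A).trace = ∑ i, (star U * B * U) i i * Real.log (hA.eigenvalues i) := by
  rw [mlog, dif_pos hA, trace_mul_mul_diagonal_mul]

theorem star_eigenvectorUnitary_mul_mul_self_apply (i : Fin m) :
    (star U * A * U) i i = hA.eigenvalues i := by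
  have h := hA.conjStarAlgAut_star_eigenvectorUnitary
  rw [Unitary.conjStarAlgAut_star_apply] at h
  simp [h]

theorem sum_star_eigenvectorUnitary_mul_mul_apply (B : Matrix (Fin m) (Fin m) ℝ) :
    ∑ i, (star U * B * U) i i = B.trace := by
  change (star U * B * U).trace = B.trace
  rw [trace_mul_cycle, Unitary.mul_star_self_of_mem hA.eigenvectorUnitary.2, one_mul]

theorem trace_mpow (c : ℝ) : (mpow A c).trace = ∑ i, hA.eigenvalues i ^ c := by
  simpa [Unitary.coe_star_mul_self] using hA.trace_mul_mpow 1 c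

theorem trace_mul_mlog_self :
    (A * mlog A).trace = ∑ i, hA.eigenvalues i * Real.log (hA.eigenvalues i) := by
  simp only [hA.trace_mul_mlog, hA.star_eigenvectorUnitary_mul_mul_self_apply]

theorem trace_eq_sum_eigenvalues_real : A.trace = ∑ i, hA.eigenvalues i := by
  simpa using hA.trace_eq_sum_eigenvalues

end Matrix.IsHermitian

section BetaDivergence

open Real

variable {ι κ : Type*} [Fintype ι] [Fintype κ] {a : ι → ℝ} {b c : κ → ℝ}

theorem hasDerivAt_sum_rpow_sub_sum_mul_rpow_sub_one (ha : ∀ i, 0 < a i) (hb : ∀ j, 0 < b j) :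
    HasDerivAt (fun β : ℝ => ∑ i, a i ^ β - ∑ j, c j * b j ^ (β - 1))
      (∑ i, a i * log (a i) - ∑ j, c j * log (b j)) 1 := by
  have hpow : ∀ i, HasDerivAt (fun β : ℝ => a i ^ β) (a i * log (a i)) 1 := fun i => by
    simpa using (hasStrictDerivAt_const_rpow (ha i) 1).hasDerivAt
  have hpow' : ∀ j, HasDerivAt (fun β : ℝ => c j * b j ^ (β - 1)) (c j * log (b j)) 1 :=
    fun j => by
      simpa using ((hasStrictDerivAt_const_rpow (hb j) (1 - 1)).hasDerivAt.comp_sub_const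
        1 1).const_mul (c j)
  exact (HasDerivAt.fun_sum fun i _ => hpow i).sub (HasDerivAt.fun_sum fun j _ => hpow' j)

theorem tendsto_betaDivergence_sum (ha : ∀ i, 0 < a i) (hb : ∀ j, 0 < b j)
    (hc : ∑ j, c j = ∑ i, a i) :
    Tendsto (fun β : ℝ => 1 / (β - 1) * (∑ i, a i ^ β - ∑ j, c j * b j ^ (β - 1)) -
        1 / β * (∑ i, a i ^ β - ∑ j, b j ^ β)) (𝓝[≠] 1)
      (𝓝 (∑ i, a i * log (a i) - ∑ j, c j * log (b j) - (∑ i, a i - ∑ j, b j))) := by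
  have hslope := hasDerivAt_iff_tendsto_slope.mp
    (hasDerivAt_sum_rpow_sub_sum_mul_rpow_sub_one (c := c) ha hb)
  have hcont : ContinuousAt (fun β : ℝ => 1 / β * (∑ i, a i ^ β - ∑ j, b j ^ β)) 1 := by
    have := fun i => (ha i).ne'
    have := fun j => (hb j).ne'
    fun_prop (disch := simp_all)
  convert hslope.sub (hcont.tendsto.mono_left nhdsWithin_le_nhds) using 2
  · rw [slope_def_field]
    simp [hc, div_eq_inv_mul]
  · simp

end BetaDivergence

theorem beta_matrix_divergence_tendsto_vonNeumann_general {n : ℕ}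
    (P Q : Matrix (Fin n) (Fin n) ℝ) (hP : P.PosDef) (hQ : Q.PosDef) :
    Tendsto (fun β : ℝ =>
        ((1 / (β - 1)) • (mpow P β - P * mpow Q (β - 1)) -
          (1 / β) • (mpow P β - mpow Q β)).trace)
      (𝓝[≠] 1) (𝓝 ((P * (mlog P - mlog Q) - P + Q).trace)) := by
  have hPh := hP.isHermitian
  have hQh := hQ.isHermitian
  set c : Fin n → ℝ := fun j =>
    (star (hQh.eigenvectorUnitary : Matrix (Fin n) (Fin n) ℝ) * P * hQh.eigenvectorUnitary) j j
  have hc : ∑ j, c j = ∑ i, hPh.eigenvalues i := by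
    rw [hQh.sum_star_eigenvectorUnitary_mul_mul_apply, hPh.trace_eq_sum_eigenvalues_real]
  have hlimit : (P * (mlog P - mlog Q) - P + Q).trace =
      ∑ i, hPh.eigenvalues i * Real.log (hPh.eigenvalues i) -
        ∑ j, c j * Real.log (hQh.eigenvalues j) -
        (∑ i, hPh.eigenvalues i - ∑ j, hQh.eigenvalues j) := by
    rw [trace_add, trace_sub, mul_sub, trace_sub, hPh.trace_mul_mlog_self, hQh.trace_mul_mlog,
      hPh.trace_eq_sum_eigenvalues_real, hQh.trace_eq_sum_eigenvalues_real]
    ring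
  rw [hlimit]
  refine (tendsto_betaDivergence_sum hP.eigenvalues_pos hQ.eigenvalues_pos hc).congr fun β => ?_
  rw [trace_sub, trace_smul, trace_smul, trace_sub, trace_sub, hPh.trace_mpow, hQh.trace_mpow,
    hQh.trace_mul_mpow, smul_eq_mul, smul_eq_mul]

theorem beta_matrix_divergence_tendsto_vonNeumann {n : ℕ}
    (P Q : Matrix (Fin n) (Fin n) ℝ) (hP : P.PosDef) (hQ : Q.PosDef)
    (hPQ : Commute P Q) :
    Tendsto (fun β : ℝ =>
        ((1 / (β - 1)) • (mpow P β - P * mpow Q (β - 1)) -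
          (1 / β) • (mpow P β - mpow Q β)).trace)
      (𝓝[≠] 1) (𝓝 ((P * (mlog P - mlog Q) - P + Q).trace)) :=
  beta_matrix_divergence_tendsto_vonNeumann_general P Q hP hQ
end

section
/- For a real symmetric positive definite n×n matrix X, a real number c, and a symmetric direction Δ, the Fréchet derivative of X ↦ tr(X^c) at X in direction Δ equals c·tr(X^(c−1)·Δ). -/
open Filter Topology Matrix

/-!
Choose a compact interval `[a, b] ⊂ (0, ∞)` containing the spectra of all `X + tΔ` with `|t|`
small, and polynomials `pₖ` with `pₖ → x ^ c` and `pₖ' → c x ^ (c - 1)` uniformly on `[a, b]`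
(integrate a Weierstrass approximation of the derivative). For a polynomial, cyclicity of the
trace gives `d/dt tr p(X + tΔ) = tr (p'(X + tΔ) Δ)`. In an eigenbasis of `X + tΔ` both traces are
weighted sums over the eigenvalues with weights bounded independently of `t`, so the functions and
their derivatives converge uniformly in `t` and the derivative passes to the limit.
-/

open Polynomial Set

theorem Polynomial.exists_derivative_eq {K : Type*} [Field K] [CharZero K] (q : K[X]) :
    ∃ p : K[X], derivative p = q := by
  induction q using Polynomial.induction_on' with
  | add q r hq hr =>
    obtain ⟨p, rfl⟩ := hq
    obtain ⟨p', rfl⟩ := hr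
    exact ⟨p + p', derivative_add⟩
  | monomial n a =>
    refine ⟨monomial (n + 1) (a / (n + 1)), ?_⟩
    rw [derivative_monomial]
    congr 1
    push_cast
    field_simp

theorem exists_polynomial_near_of_hasDerivAt {f f' : ℝ → ℝ} {a b ε : ℝ}
    (hf : ∀ x ∈ Icc a b, HasDerivAt f (f' x) x) (hf' : ContinuousOn f' (Icc a b)) (hε : 0 < ε) :
    ∃ p : ℝ[X], ∀ x ∈ Icc a b, |p.eval x - f x| ≤ ε ∧ |(derivative p).eval x - f' x| ≤ ε := by
  set η := ε / (|b - a| + 1)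
  have hηε : η * |b - a| ≤ ε := by
    rw [div_mul_eq_mul_div, div_le_iff₀ (by positivity)]
    nlinarith [abs_nonneg (b - a)]
  have hη : η ≤ ε := div_le_self hε.le (by linarith [abs_nonneg (b - a)])
  obtain ⟨q, hq⟩ := exists_polynomial_near_of_continuousOn a b f' hf' η (by positivity)
  obtain ⟨P, hP⟩ := exists_derivative_eq q
  set p := P + C (f a - P.eval a)
  have hp : derivative p = q := by simp [p, hP]
  refine ⟨p, fun x hx => ⟨?_, by rw [hp]; exact (hq x hx).le.trans hη⟩⟩
  have hmvt := (convex_Icc a b).norm_image_sub_le_of_norm_hasDerivWithin_le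
    (f := fun y => p.eval y - f y)
    (fun y hy => by simpa only [hp] using ((p.hasDerivAt y).fun_sub (hf y hy)).hasDerivWithinAt)
    (fun y hy => (hq y hy).le) ⟨le_rfl, hx.1.trans hx.2⟩ hx
  have hpa : p.eval a = f a := by simp [p]
  simp only [hpa, sub_self, sub_zero, Real.norm_eq_abs] at hmvt
  refine hmvt.trans (le_trans ?_ hηε)
  gcongr
  · linarith [hx.1]
  · linarith [hx.2]

theorem tendstoUniformlyOn_of_abs_sub_le {κ α : Type*} {l : Filter κ} {F : κ → α → ℝ}
    {G : α → ℝ} {s : Set α} {u : κ → ℝ} (hu : Tendsto u l (𝓝 0))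
    (h : ∀ k, ∀ x ∈ s, |F k x - G x| ≤ u k) : TendstoUniformlyOn F G l s := by
  refine Metric.tendstoUniformlyOn_iff.mpr fun ε hε => ?_
  filter_upwards [hu.eventually (gt_mem_nhds hε)] with k hk x hx
  rw [dist_comm, Real.dist_eq]
  exact (h k x hx).trans_lt hk

section TraceDerivative

attribute [local instance] Matrix.linftyOpNormedRing Matrix.linftyOpNormedAlgebra

variable {ι : Type*} [Fintype ι] [DecidableEq ι] {A : ℝ → Matrix ι ι ℝ} {A' : Matrix ι ι ℝ}
  {t : ℝ}

theorem HasDerivAt.matrix_trace (h : HasDerivAt A A' t) :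
    HasDerivAt (fun s => (A s).trace) A'.trace t :=
  (traceLinearMap ι ℝ ℝ).toContinuousLinearMap.hasFDerivAt.comp_hasDerivAt t h

theorem HasDerivAt.matrix_trace_pow (h : HasDerivAt A A' t) (k : ℕ) :
    HasDerivAt (fun s => (A s ^ k).trace) (k * (A t ^ (k - 1) * A').trace) t := by
  convert (h.fun_pow' k).matrix_trace using 1
  rw [trace_sum, Finset.sum_congr rfl fun i hi => ?_, Finset.sum_const, Finset.card_range,
    nsmul_eq_mul]
  rw [trace_mul_cycle, ← pow_add, Nat.pred_eq_sub_one]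
  congr 3
  have := Finset.mem_range.mp hi
  omega

theorem HasDerivAt.matrix_trace_aeval (h : HasDerivAt A A' t) (p : ℝ[X]) :
    HasDerivAt (fun s => (aeval (A s) p).trace) (aeval (A t) (derivative p) * A').trace t := by
  induction p using Polynomial.induction_on' with
  | add p q hp hq =>
    simpa only [map_add, trace_add, add_mul] using hp.fun_add hq
  | monomial k a =>
    simpa only [aeval_monomial, derivative_monomial, ← Algebra.smul_def, trace_smul, smul_mul_assoc,
      smul_eq_mul, mul_assoc] using (h.matrix_trace_pow k).const_mul a

theorem hasDerivAt_trace_aeval_add_smul (X Δ : Matrix ι ι ℝ) (p : ℝ[X]) (t : ℝ) :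
    HasDerivAt (fun s => (aeval (X + s • Δ) p).trace)
      (aeval (X + t • Δ) (derivative p) * Δ).trace t :=
  ((((hasDerivAt_id t).smul_const Δ).const_add X).congr_deriv (one_smul ℝ Δ)).matrix_trace_aeval p

end TraceDerivative

namespace Matrix

variable {ι : Type*} [Fintype ι]

theorem abs_dotProduct_mulVec_le {v : ι → ℝ} (hv : v ⬝ᵥ v = 1) (M : Matrix ι ι ℝ) :
    |v ⬝ᵥ M *ᵥ v| ≤ ∑ i, ∑ j, |M i j| := by
  have hle : ∀ i, |v i| ≤ 1 := fun i => by
    rw [← sq_le_one_iff_abs_le_one, ← hv, dotProduct, sq]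
    exact Finset.single_le_sum (f := fun j => v j * v j) (fun j _ => mul_self_nonneg _)
      (Finset.mem_univ i)
  calc |v ⬝ᵥ M *ᵥ v| = |∑ i, ∑ j, v i * M i j * v j| := by
        simp only [dotProduct, mulVec, Finset.mul_sum, mul_assoc]
    _ ≤ ∑ i, ∑ j, |v i * M i j * v j| :=
        (Finset.abs_sum_le_sum_abs _ _).trans
          (Finset.sum_le_sum fun i _ => Finset.abs_sum_le_sum_abs _ _)
    _ ≤ ∑ i, ∑ j, |M i j| := by
        refine Finset.sum_le_sum fun i _ => Finset.sum_le_sum fun j _ => ?_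
        rw [abs_mul, abs_mul]
        calc |v i| * |M i j| * |v j| ≤ 1 * |M i j| * 1 := by gcongr <;> exact hle _
          _ = |M i j| := by ring

variable [DecidableEq ι] {A : Matrix ι ι ℝ}

namespace IsHermitian

theorem dotProduct_eigenvectorBasis_self (hA : A.IsHermitian) (i : ι) :
    ⇑(hA.eigenvectorBasis i) ⬝ᵥ ⇑(hA.eigenvectorBasis i) = 1 := by
  have h : inner ℝ (hA.eigenvectorBasis i) (hA.eigenvectorBasis i) = 1 := by
    rw [real_inner_self_eq_norm_sq, hA.eigenvectorBasis.orthonormal.1 i, one_pow]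
  rwa [EuclideanSpace.inner_eq_star_dotProduct, star_trivial] at h

theorem eigenvalues_eq_dotProduct (hA : A.IsHermitian) (i : ι) :
    hA.eigenvalues i = ⇑(hA.eigenvectorBasis i) ⬝ᵥ A *ᵥ ⇑(hA.eigenvectorBasis i) := by
  simpa using hA.eigenvalues_eq i

theorem mul_dotProduct_self_le_dotProduct_mulVec (hA : A.IsHermitian) {r : ℝ}
    (hr : ∀ i, r ≤ hA.eigenvalues i) (v : ι → ℝ) : r * (v ⬝ᵥ v) ≤ v ⬝ᵥ A *ᵥ v := by
  have hpsd : (A - algebraMap ℝ _ r).PosSemidef := by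
    refine posSemidef_iff_isHermitian_and_spectrum_nonneg.mpr ⟨?_, ?_⟩
    · exact hA.sub (IsSelfAdjoint.algebraMap _ (.all r))
    · rw [← spectrum.sub_singleton_eq, hA.spectrum_real_eq_range_eigenvalues]
      rintro _ ⟨_, ⟨i, rfl⟩, _, rfl, rfl⟩
      exact sub_nonneg.mpr (hr i)
  have := hpsd.dotProduct_mulVec_nonneg v
  simpa [sub_mulVec, dotProduct_sub, Algebra.algebraMap_eq_smul_one, smul_mulVec] using this

theorem trace_cfc_mul (hA : A.IsHermitian) (f : ℝ → ℝ) (M : Matrix ι ι ℝ) :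
    (cfc f A * M).trace =
      ∑ i, f (hA.eigenvalues i) * (⇑(hA.eigenvectorBasis i) ⬝ᵥ M *ᵥ ⇑(hA.eigenvectorBasis i)) := by
  rw [hA.cfc_eq, IsHermitian.cfc, Unitary.conjStarAlgAut_apply, Matrix.mul_assoc,
    trace_mul_cycle, trace_mul_comm]
  simp only [trace, diag, diagonal_mul, Function.comp_apply, RCLike.ofReal_real_eq_id, id]
  refine Finset.sum_congr rfl fun i _ => congrArg _ ?_
  simp only [mul_apply, star_apply, star_trivial, eigenvectorUnitary_apply, dotProduct, mulVec,
    Finset.mul_sum, Finset.sum_mul]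
  rw [Finset.sum_comm]
  simp only [mul_comm, mul_left_comm, mul_assoc]

theorem abs_trace_cfc_mul_sub_le (hA : A.IsHermitian) {f g : ℝ → ℝ} {ε : ℝ}
    (hfg : ∀ x ∈ spectrum ℝ A, |f x - g x| ≤ ε) (M : Matrix ι ι ℝ) :
    |(cfc f A * M).trace - (cfc g A * M).trace| ≤ ε * (Fintype.card ι * ∑ i, ∑ j, |M i j|) := by
  rw [hA.trace_cfc_mul, hA.trace_cfc_mul, ← Finset.sum_sub_distrib]
  refine (Finset.abs_sum_le_sum_abs _ _).trans ?_
  rw [mul_left_comm, ← Finset.card_univ, ← nsmul_eq_mul, ← Finset.sum_const]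
  refine Finset.sum_le_sum fun i _ => ?_
  rw [← sub_mul, abs_mul]
  exact mul_le_mul (hfg _ (hA.eigenvalues_mem_spectrum_real i))
    (abs_dotProduct_mulVec_le (hA.dotProduct_eigenvectorBasis_self i) M) (abs_nonneg _)
    ((abs_nonneg _).trans (hfg _ (hA.eigenvalues_mem_spectrum_real i)))

end IsHermitian

theorem PosDef.exists_spectrum_add_smul_subset_Icc {X Δ : Matrix ι ι ℝ} (hX : X.PosDef)
    (hΔ : Δ.IsHermitian) :
    ∃ δ : ℝ, 0 < δ ∧ ∃ a : ℝ, 0 < a ∧ ∃ b : ℝ,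
      ∀ t ∈ Ioo (-δ) δ, spectrum ℝ (X + t • Δ) ⊆ Icc a b := by
  obtain ⟨μ, hμ, hμX⟩ : ∃ μ > 0, ∀ i, μ ≤ hX.isHermitian.eigenvalues i := by
    rcases isEmpty_or_nonempty ι with _ | _
    · exact ⟨1, one_pos, isEmptyElim⟩
    · obtain ⟨i, hi⟩ := Finite.exists_min hX.isHermitian.eigenvalues
      exact ⟨_, hX.eigenvalues_pos i, hi⟩
  set K := ∑ i, ∑ j, |Δ i j|
  have hK : 0 ≤ K := by positivity
  refine ⟨μ / (2 * (K + 1)), by positivity, μ / 2, by positivity, ∑ i, ∑ j, |X i j| + μ / 2,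
    fun t ht => ?_⟩
  have hH : (X + t • Δ).IsHermitian := hX.isHermitian.add (hΔ.smul (.all t))
  rw [hH.spectrum_real_eq_range_eigenvalues]
  rintro _ ⟨i, rfl⟩
  set v := ⇑(hH.eigenvectorBasis i)
  have hv : v ⬝ᵥ v = 1 := hH.dotProduct_eigenvectorBasis_self i
  have hsplit : hH.eigenvalues i = v ⬝ᵥ X *ᵥ v + t * (v ⬝ᵥ Δ *ᵥ v) := by
    rw [hH.eigenvalues_eq_dotProduct, add_mulVec, smul_mulVec, dotProduct_add, dotProduct_smul,
      smul_eq_mul]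
  have hXlo : μ ≤ v ⬝ᵥ X *ᵥ v := by
    simpa [hv] using hX.isHermitian.mul_dotProduct_self_le_dotProduct_mulVec hμX v
  have hXhi := (abs_le.mp (abs_dotProduct_mulVec_le hv X)).2
  have hpert : |t * (v ⬝ᵥ Δ *ᵥ v)| ≤ μ / 2 := by
    rw [abs_mul]
    calc |t| * |v ⬝ᵥ Δ *ᵥ v| ≤ μ / (2 * (K + 1)) * (K + 1) := by
          gcongr
          · exact (abs_lt.mpr ht).le
          · linarith [abs_dotProduct_mulVec_le hv Δ]
      _ = μ / 2 := by field_simp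
  rw [hsplit]
  constructor <;> linarith [abs_le.mp hpert]

theorem hasDerivAt_trace_cfc_add_smul {X Δ : Matrix ι ι ℝ} (hX : X.IsHermitian)
    (hΔ : Δ.IsHermitian) {f f' : ℝ → ℝ} {a b δ : ℝ} (hδ : 0 < δ)
    (hspec : ∀ t ∈ Ioo (-δ) δ, spectrum ℝ (X + t • Δ) ⊆ Icc a b)
    (hf : ∀ x ∈ Icc a b, HasDerivAt f (f' x) x) (hf' : ContinuousOn f' (Icc a b)) :
    HasDerivAt (fun t : ℝ => (cfc f (X + t • Δ)).trace) (cfc f' X * Δ).trace 0 := by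
  have hH (t : ℝ) : (X + t • Δ).IsHermitian := hX.add (hΔ.smul (.all t))
  have haeval (q : ℝ[X]) (t : ℝ) : aeval (X + t • Δ) q = cfc q.eval (X + t • Δ) :=
    (cfc_polynomial q _ (hH t).isSelfAdjoint).symm
  choose p hp using fun k : ℕ =>
    exists_polynomial_near_of_hasDerivAt hf hf' (Nat.one_div_pos_of_nat (n := k))
  have hu (C : ℝ) : Tendsto (fun k : ℕ => 1 / ((k : ℝ) + 1) * C) atTop (𝓝 0) := by
    simpa using tendsto_one_div_add_atTop_nhds_zero_nat.mul_const C
  have hvalues : TendstoUniformlyOn (fun k t => (aeval (X + t • Δ) (p k)).trace)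
      (fun t => (cfc f (X + t • Δ)).trace) atTop (Ioo (-δ) δ) :=
    tendstoUniformlyOn_of_abs_sub_le (hu _) fun k t ht => by
      rw [haeval]
      simpa only [mul_one] using
        (hH t).abs_trace_cfc_mul_sub_le (fun x hx => (hp k x (hspec t ht hx)).1) 1
  have hderivs : TendstoUniformlyOn (fun k t => (aeval (X + t • Δ) (derivative (p k)) * Δ).trace)
      (fun t => (cfc f' (X + t • Δ) * Δ).trace) atTop (Ioo (-δ) δ) :=
    tendstoUniformlyOn_of_abs_sub_le (hu _) fun k t ht => by
      rw [haeval]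
      exact (hH t).abs_trace_cfc_mul_sub_le (fun x hx => (hp k x (hspec t ht hx)).2) Δ
  simpa using hasDerivAt_of_tendstoUniformlyOn isOpen_Ioo hderivs
    (.of_forall fun k t _ => hasDerivAt_trace_aeval_add_smul X Δ (p k) t)
    (fun t ht => hvalues.tendsto_at ht) ⟨neg_neg_of_pos hδ, hδ⟩

end Matrix

theorem mpow_eq_cfc {m : ℕ} {A : Matrix (Fin m) (Fin m) ℝ} (hA : A.IsHermitian) (c : ℝ) :
    mpow A c = cfc (fun x : ℝ => x ^ c) A := by
  rw [mpow, dif_pos hA, hA.cfc_eq, Matrix.IsHermitian.cfc, Unitary.conjStarAlgAut_apply]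
  rfl

theorem trace_mpow_deriv {n : ℕ}
    (X Δ : Matrix (Fin n) (Fin n) ℝ) (hX : X.PosDef) (hΔ : Δ.IsHermitian) (c : ℝ) :
    HasDerivAt (fun t : ℝ => (mpow (X + t • Δ) c).trace)
      (c * (mpow X (c - 1) * Δ).trace) 0 := by
  obtain ⟨δ, hδ, a, ha, b, hspec⟩ := hX.exists_spectrum_add_smul_subset_Icc hΔ
  have hpos {x : ℝ} (hx : x ∈ Icc a b) : x ≠ 0 := (ha.trans_le hx.1).ne'
  have hrpow : ∀ x ∈ Icc a b, HasDerivAt (fun x => x ^ c) (c * x ^ (c - 1)) x :=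
    fun x hx => Real.hasDerivAt_rpow_const (.inl (hpos hx))
  have hcont : ContinuousOn (fun x => c * x ^ (c - 1)) (Icc a b) := fun x hx =>
    ((Real.continuousAt_rpow_const x _ (.inl (hpos hx))).const_mul c).continuousWithinAt
  convert hasDerivAt_trace_cfc_add_smul hX.isHermitian hΔ hδ hspec hrpow hcont using 1
  · funext t
    rw [mpow_eq_cfc (hX.isHermitian.add (hΔ.smul (.all t)))]
  · rw [mpow_eq_cfc hX.isHermitian, hX.isHermitian.trace_cfc_mul, hX.isHermitian.trace_cfc_mul,
      Finset.mul_sum]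
    simp only [mul_assoc]
end
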